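/- arXiv:2601.21943 — 4 statements merged into one kernel-verified Lean document; each statement's English description precedes it below -/
import Mathlib

section
/- Let K ≥ 1 be an integer, let r₁, …, r_K be positive real numbers with ∏_{k=1}^K r_k = Λ, and suppose Λ ≥ 1. Then ∑_{k=1}^K (r_k − 1)² ≥ K (Λ^{1/K} − 1)², with equality when r_k = Λ^{1/K} for all k. -/
/-- For positive reals `r₁,…,r_K` with product `Λ ≥ 1`,
`∑_k (r_k − 1)² ≥ K (Λ^{1/K} − 1)²`, with equality when all `r_k = Λ^{1/K}`. -/
theorem sum_sq_ratio_ge_geometric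
    (K : ℕ) (hK : 1 ≤ K) (r : Fin K → ℝ) (hr : ∀ k, 0 < r k)
    (Λ : ℝ) (hΛdef : Λ = ∏ k, r k) (hΛ : 1 ≤ Λ) :
    (K : ℝ) * (Λ ^ ((1 : ℝ) / K) - 1) ^ 2 ≤ ∑ k, (r k - 1) ^ 2
      ∧ ((∀ k, r k = Λ ^ ((1 : ℝ) / K)) →
          ∑ k, (r k - 1) ^ 2 = (K : ℝ) * (Λ ^ ((1 : ℝ) / K) - 1) ^ 2) := by
  have hKpos : (0 : ℝ) < K := by exact_mod_cast hK
  set G : ℝ := Λ ^ ((1 : ℝ) / K) with hG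
  have hG1 : (1 : ℝ) ≤ G := Real.one_le_rpow hΛ (by positivity)
  constructor
  · -- AM-GM: ∑ r_k ≥ K * G
    have amgm : (K : ℝ) * G ≤ ∑ k, r k := by
      have h := Real.geom_mean_le_arith_mean_weighted Finset.univ
        (fun _ : Fin K => (1 : ℝ) / K) r (fun i _ => by positivity)
        (by simp [Finset.sum_const, Finset.card_univ]; field_simp)
        (fun i _ => (hr i).le)
      have hprod : (∏ k, r k ^ ((1:ℝ)/K)) = G := by
        rw [Real.finset_prod_rpow _ _ (fun i _ => (hr i).le), ← hΛdef]
      rw [hprod] at h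
      have : ∑ k, (1:ℝ)/K * r k = (1/K) * ∑ k, r k := by
        rw [Finset.mul_sum]
      rw [this] at h
      have h2 := mul_le_mul_of_nonneg_left h hKpos.le
      rw [← mul_assoc, mul_one_div, div_self hKpos.ne', one_mul] at h2
      exact h2
    have hsum1 : (K : ℝ) * (G - 1) ≤ ∑ k, (r k - 1) := by
      simp only [Finset.sum_sub_distrib, Finset.sum_const, Finset.card_univ,
        Fintype.card_fin, nsmul_eq_mul, mul_one]
      linarith
    have hnn : 0 ≤ (K : ℝ) * (G - 1) := by
      have : 0 ≤ G - 1 := by linarith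
      positivity
    have hCS : (∑ k, (r k - 1)) ^ 2 ≤ (K : ℝ) * ∑ k, (r k - 1) ^ 2 := by
      have := sq_sum_le_card_mul_sum_sq (s := Finset.univ) (f := fun k => r k - 1)
      simpa [Finset.card_univ] using this
    have hsq : ((K : ℝ) * (G - 1)) ^ 2 ≤ (∑ k, (r k - 1)) ^ 2 :=
      pow_le_pow_left₀ hnn hsum1 2
    have : (K:ℝ)^2 * (G-1)^2 ≤ (K:ℝ) * ∑ k, (r k - 1) ^ 2 := by
      calc (K:ℝ)^2 * (G-1)^2 = ((K : ℝ) * (G - 1)) ^ 2 := by ring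
        _ ≤ (∑ k, (r k - 1)) ^ 2 := hsq
        _ ≤ (K : ℝ) * ∑ k, (r k - 1) ^ 2 := hCS
    nlinarith [this]
  · intro h
    simp [h, Finset.sum_const, Finset.card_univ, nsmul_eq_mul]
end

section
/- Let ι be a countable type, c : ι → ℝ^d an injective map, and p : ι → ℝ a probability mass function (p ≥ 0 with ∑_z p(z) = 1). Fix t > 0 and define the posterior weights w_t(z′ | x) := p(z′) φ_t(x − c(z′)) / ∑_u p(u) φ_t(x − c(u)) (for x with positive denominator) and the kernel q_{t,z}(z′) := ∫_{ℝ^d} w_t(z′ | x) φ_t(x − c(z)) dx. Then for any indices z ≠ z′ with p(z) > 0, q_{t,z}(z′) ≤ (1/2) √( p(z′)/p(z) ) · exp( −‖c(z′) − c(z)‖² / (8t) ). -/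
open MeasureTheory

/-- Density of the centered Gaussian `N(0, t I_d)` on `ℝ^d`. -/
noncomputable def gaussDensity (d : ℕ) (t : ℝ) (x : EuclideanSpace ℝ (Fin d)) : ℝ :=
  (2 * Real.pi * t) ^ (-(d : ℝ) / 2) * Real.exp (-‖x‖ ^ 2 / (2 * t))

/-- Posterior weight `w_t(z′ | x) = p(z′) φ_t(x − c(z′)) / ∑_u p(u) φ_t(x − c(u))`. -/
noncomputable def postWeight {ι : Type*} (d : ℕ) (t : ℝ) (p : ι → ℝ)
    (c : ι → EuclideanSpace ℝ (Fin d)) (z' : ι) (x : EuclideanSpace ℝ (Fin d)) : ℝ :=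
  p z' * gaussDensity d t (x - c z') / ∑' u, p u * gaussDensity d t (x - c u)

/-- Kernel `q_{t,z}(z′) = ∫ w_t(z′ | x) φ_t(x − c(z)) dx`. -/
noncomputable def postKernel {ι : Type*} (d : ℕ) (t : ℝ) (p : ι → ℝ)
    (c : ι → EuclideanSpace ℝ (Fin d)) (z z' : ι) : ℝ :=
  ∫ x, postWeight d t p c z' x * gaussDensity d t (x - c z)

/-! Keeping only the terms `z, z'` of the evidence `∑ᵤ p(u) φ_t(x - c u)` gives, with
`a = p(z) φ_t(x - c z)` and `b = p(z') φ_t(x - c z')`,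
`w_t(z' | x) φ_t(x - c z) ≤ ab / (a + b) / p(z) ≤ √(ab) / (2 p(z))`.
By the parallelogram law, `√(φ_t(x - c z) φ_t(x - c z'))` is `exp (-‖c z' - c z‖² / (8t))` times the
Gaussian density centred at the midpoint of `c z` and `c z'`, which integrates to `1`. -/

open Real

section Gaussian

variable {d : ℕ} {t : ℝ}

lemma gaussDensity_pos (ht : 0 < t) (x : EuclideanSpace ℝ (Fin d)) : 0 < gaussDensity d t x := by
  unfold gaussDensity
  have : 0 < 2 * π * t := by positivity
  positivity

lemma integral_gaussDensity_sub (ht : 0 < t) (m : EuclideanSpace ℝ (Fin d)) :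
    ∫ x, gaussDensity d t (x - m) = 1 := by
  have hb : (0 : ℝ) < 1 / (2 * t) := by positivity
  have hexp : ∀ x : EuclideanSpace ℝ (Fin d), -‖x‖ ^ 2 / (2 * t) = -(1 / (2 * t)) * ‖x‖ ^ 2 :=
    fun x => by ring
  rw [integral_sub_right_eq_self (fun x => gaussDensity d t x) m]
  simp only [gaussDensity, hexp]
  rw [integral_const_mul, GaussianFourier.integral_rexp_neg_mul_sq_norm hb,
    finrank_euclideanSpace_fin, show π / (1 / (2 * t)) = 2 * π * t by field_simp,
    ← rpow_add (by positivity), neg_div, neg_add_cancel, rpow_zero]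

lemma integrable_gaussDensity_sub (ht : 0 < t) (m : EuclideanSpace ℝ (Fin d)) :
    Integrable fun x => gaussDensity d t (x - m) :=
  Integrable.of_integral_ne_zero (by rw [integral_gaussDensity_sub ht]; exact one_ne_zero)

lemma norm_sub_sq_add_norm_sub_sq {E : Type*} [NormedAddCommGroup E] [InnerProductSpace ℝ E]
    (x a b : E) :
    ‖x - a‖ ^ 2 + ‖x - b‖ ^ 2 = 2 * ‖x - midpoint ℝ a b‖ ^ 2 + ‖a - b‖ ^ 2 / 2 := by
  have h := EuclideanGeometry.dist_sq_add_dist_sq_eq_two_mul_dist_midpoint_sq_add_half_dist_sq x a b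
  simp only [dist_eq_norm] at h
  linarith

lemma gaussDensity_sub_mul_gaussDensity_sub (ht : 0 < t) (x a b : EuclideanSpace ℝ (Fin d)) :
    gaussDensity d t (x - a) * gaussDensity d t (x - b)
      = (exp (-‖a - b‖ ^ 2 / (8 * t)) * gaussDensity d t (x - midpoint ℝ a b)) ^ 2 := by
  have hexp : -‖x - a‖ ^ 2 / (2 * t) + -‖x - b‖ ^ 2 / (2 * t)
      = (-‖a - b‖ ^ 2 / (8 * t) + -‖a - b‖ ^ 2 / (8 * t))
        + (-‖x - midpoint ℝ a b‖ ^ 2 / (2 * t) + -‖x - midpoint ℝ a b‖ ^ 2 / (2 * t)) := by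
    field_simp
    linear_combination -8 * norm_sub_sq_add_norm_sub_sq x a b
  have := congrArg exp hexp
  simp only [exp_add] at this
  simp only [gaussDensity]
  linear_combination ((2 * π * t) ^ (-(d : ℝ) / 2)) ^ 2 * this

end Gaussian

lemma mul_div_add_le_sqrt_mul_div_two {a b : ℝ} (ha : 0 ≤ a) (hb : 0 ≤ b) :
    a * b / (a + b) ≤ √(a * b) / 2 := by
  rcases (add_nonneg ha hb).eq_or_lt with h | h
  · rw [← h, div_zero]; positivity
  · rw [div_le_div_iff₀ h two_pos, sqrt_mul ha b]
    nlinarith [sq_sqrt ha, sq_sqrt hb, sqrt_nonneg a, sqrt_nonneg b,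
      mul_nonneg (mul_nonneg (sqrt_nonneg a) (sqrt_nonneg b)) (sq_nonneg (√a - √b))]

/-- Also true when `f` is not summable, since then `∑' u, f u = 0`. -/
lemma div_tsum_le_div_add {ι : Type*} {f : ι → ℝ} (hf : ∀ u, 0 ≤ f u) {z z' : ι} (hne : z ≠ z')
    (hz : 0 < f z) : f z' / ∑' u, f u ≤ f z' / (f z + f z') := by
  classical
  by_cases hs : Summable f
  · refine div_le_div_of_nonneg_left (hf z') (by linarith [hf z']) ?_
    simpa [Finset.sum_pair hne] using hs.sum_le_tsum {z, z'} (fun u _ => hf u)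
  · rw [tsum_eq_zero_of_not_summable hs, div_zero]
    exact div_nonneg (hf z') (by linarith [hf z'])

section Posterior

variable {ι : Type*} {d : ℕ} {t : ℝ} {p : ι → ℝ} {c : ι → EuclideanSpace ℝ (Fin d)}

lemma postWeight_nonneg (hp : ∀ z, 0 ≤ p z) (ht : 0 < t) (z' : ι) (x : EuclideanSpace ℝ (Fin d)) :
    0 ≤ postWeight d t p c z' x :=
  div_nonneg (mul_nonneg (hp z') (gaussDensity_pos ht _).le)
    (tsum_nonneg fun u => mul_nonneg (hp u) (gaussDensity_pos ht _).le)

lemma postWeight_mul_gaussDensity_le (hp : ∀ z, 0 ≤ p z) (ht : 0 < t) {z z' : ι} (hne : z ≠ z')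
    (hpz : 0 < p z) (x : EuclideanSpace ℝ (Fin d)) :
    postWeight d t p c z' x * gaussDensity d t (x - c z)
      ≤ (1 / 2) * √(p z' / p z) * exp (-‖c z' - c z‖ ^ 2 / (8 * t))
        * gaussDensity d t (x - midpoint ℝ (c z') (c z)) := by
  set g := gaussDensity d t (x - c z)
  set g' := gaussDensity d t (x - c z')
  set G := exp (-‖c z' - c z‖ ^ 2 / (8 * t)) * gaussDensity d t (x - midpoint ℝ (c z') (c z))
  have hg : 0 < g := gaussDensity_pos ht _
  have hg' : 0 ≤ g' := (gaussDensity_pos ht _).le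
  have hG : 0 ≤ G := mul_nonneg (exp_pos _).le (gaussDensity_pos ht _).le
  have hprod : p z * g * (p z' * g') = (p z * G) ^ 2 * (p z' / p z) := by
    have hgg : g' * g = G ^ 2 := gaussDensity_sub_mul_gaussDensity_sub ht x (c z') (c z)
    have : (p z * G) ^ 2 * (p z' / p z) = p z * p z' * G ^ 2 := by field_simp
    rw [this]
    linear_combination p z * p z' * hgg
  calc postWeight d t p c z' x * g
      ≤ p z' * g' / (p z * g + p z' * g') * g := by
        refine mul_le_mul_of_nonneg_right ?_ hg.le
        exact div_tsum_le_div_add (f := fun u => p u * gaussDensity d t (x - c u))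
          (fun u => mul_nonneg (hp u) (gaussDensity_pos ht _).le) hne (mul_pos hpz hg)
    _ = p z * g * (p z' * g') / (p z * g + p z' * g') / p z := by field_simp
    _ ≤ √(p z * g * (p z' * g')) / 2 / p z := by
        gcongr ?_ / _
        exact mul_div_add_le_sqrt_mul_div_two (mul_pos hpz hg).le (mul_nonneg (hp z') hg')
    _ = (1 / 2) * √(p z' / p z) * G := by
        rw [hprod, sqrt_mul (sq_nonneg _), sqrt_sq (mul_nonneg hpz.le hG)]
        field_simp
    _ = _ := (mul_assoc _ _ _).symm

end Posterior

theorem postKernel_le_hellinger_bound_general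
    {ι : Type*} {d : ℕ} (c : ι → EuclideanSpace ℝ (Fin d))
    (p : ι → ℝ) (hp : ∀ z, 0 ≤ p z)
    (t : ℝ) (ht : 0 < t) (z z' : ι) (hne : z ≠ z') (hpz : 0 < p z) :
    postKernel d t p c z z'
      ≤ (1 / 2) * Real.sqrt (p z' / p z) * Real.exp (-‖c z' - c z‖ ^ 2 / (8 * t)) := by
  set C := (1 / 2) * √(p z' / p z) * exp (-‖c z' - c z‖ ^ 2 / (8 * t))
  set m := midpoint ℝ (c z') (c z)
  calc postKernel d t p c z z'
      ≤ ∫ x, C * gaussDensity d t (x - m) :=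
        integral_mono_of_nonneg
          (.of_forall fun x => mul_nonneg (postWeight_nonneg hp ht z' x) (gaussDensity_pos ht _).le)
          ((integrable_gaussDensity_sub ht m).const_mul C)
          (.of_forall (postWeight_mul_gaussDensity_le hp ht hne hpz))
    _ = C := by rw [integral_const_mul, integral_gaussDensity_sub ht, mul_one]

/-- For `z ≠ z′` with `p(z) > 0`,
`q_{t,z}(z′) ≤ (1/2) √(p(z′)/p(z)) exp(−‖c(z′) − c(z)‖²/(8t))`. -/
theorem postKernel_le_hellinger_bound
    {ι : Type*} [Countable ι] {d : ℕ} (c : ι → EuclideanSpace ℝ (Fin d))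
    (hc : Function.Injective c) (p : ι → ℝ) (hp : ∀ z, 0 ≤ p z) (hp1 : ∑' z, p z = 1)
    (t : ℝ) (ht : 0 < t) (z z' : ι) (hne : z ≠ z') (hpz : 0 < p z) :
    postKernel d t p c z z'
      ≤ (1 / 2) * Real.sqrt (p z' / p z) * Real.exp (-‖c z' - c z‖ ^ 2 / (8 * t)) :=
  postKernel_le_hellinger_bound_general c p hp t ht z z' hne hpz
end

section
/- Let ι be a countable type and p : ι → ℝ a probability mass function (p ≥ 0 with ∑_z p(z) = 1). Define the information content I(z) := −log p(z) for z with p(z) > 0, and assume the Shannon entropy H := ∑_z p(z) I(z) is finite. Suppose there exist ν > 0 and b ∈ (0, 2] such that for all real λ with |λ| ≤ 1/b, ∑_z p(z) exp( λ (I(z) − H) ) ≤ exp( ν² λ² ). Then ∑_z √(p(z)) is finite and 2 log( ∑_z √(p(z)) ) ≤ H + ν²/2; that is, the order-1/2 Rényi entropy H_{1/2} := 2 log ∑_z √(p(z)) satisfies H_{1/2} ≤ H + ν²/2. -/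
/-!
At `λ = 1/2` the weight `p z * exp (λ (I z - H))` is exactly `√(p z) * exp (-H/2)`, so the
moment generating function bound at `λ = 1/2 ≤ 1/b` reads `e^{-H/2} ∑ √p ≤ e^{ν²/4}`;
taking logarithms gives `H_{1/2} ≤ H + ν²/2`.
-/

open Real

lemma mul_exp_half_mul_neg_log_sub {x : ℝ} (hx : 0 ≤ x) (H : ℝ) :
    x * exp (1 / 2 * (-log x - H)) = √x * exp (-(H / 2)) := by
  rcases hx.eq_or_lt with rfl | hx
  · simp
  have hsqrt : 0 < √x := sqrt_pos.2 hx
  have hexp : exp (1 / 2 * (-log x - H)) = (√x)⁻¹ * exp (-(H / 2)) := by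
    rw [← exp_log (inv_pos.2 hsqrt), ← exp_add, log_inv, log_sqrt hx.le]
    ring_nf
  rw [hexp, ← mul_assoc, ← div_eq_mul_inv, div_sqrt]

lemma summable_and_tsum_le_of_tsum_ofReal_le {ι : Type*} {f : ι → ℝ} (hf : ∀ i, 0 ≤ f i)
    {C : ℝ} (hC : 0 ≤ C) (h : ∑' i, ENNReal.ofReal (f i) ≤ ENNReal.ofReal C) :
    Summable f ∧ ∑' i, f i ≤ C := by
  have hsum : Summable f := by
    simpa only [ENNReal.toReal_ofReal (hf _)] using
      ENNReal.summable_toReal (h.trans_lt ENNReal.ofReal_lt_top).ne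
  refine ⟨hsum, ?_⟩
  rwa [← ENNReal.ofReal_le_ofReal_iff hC, ENNReal.ofReal_tsum_of_nonneg hf hsum]

theorem renyi_half_le_shannon_add_subexp_general
    {ι : Type*} (p : ι → ℝ) (hp : ∀ z, 0 ≤ p z) (hp1 : ∑' z, p z = 1)
    (H : ℝ)
    (ν b : ℝ) (hb : 0 < b) (hb2 : b ≤ 2)
    (hmgf : ∀ lam : ℝ, |lam| ≤ 1 / b →
      ∑' z, ENNReal.ofReal (p z * Real.exp (lam * (-Real.log (p z) - H)))
        ≤ ENNReal.ofReal (Real.exp (ν ^ 2 * lam ^ 2))) :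
    Summable (fun z => Real.sqrt (p z)) ∧
      2 * Real.log (∑' z, Real.sqrt (p z)) ≤ H + ν ^ 2 / 2 := by
  have hlam : |(1 : ℝ) / 2| ≤ 1 / b := by
    rw [abs_of_pos one_half_pos]
    exact one_div_le_one_div_of_le hb hb2
  have hmgf_half := hmgf (1 / 2) hlam
  simp only [mul_exp_half_mul_neg_log_sub (hp _)] at hmgf_half
  obtain ⟨hsum, hle⟩ := summable_and_tsum_le_of_tsum_ofReal_le
    (fun z => mul_nonneg (sqrt_nonneg _) (exp_pos _).le) (exp_pos _).le hmgf_half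
  have hsqrt : Summable (fun z => √(p z)) := (summable_mul_right_iff (exp_pos _).ne').1 hsum
  refine ⟨hsqrt, ?_⟩
  obtain ⟨z, hz⟩ : ∃ z, p z ≠ 0 := by
    by_contra! h
    simp [h] at hp1
  have hS : 0 < ∑' z, √(p z) :=
    hsqrt.tsum_pos (fun _ => sqrt_nonneg _) z (sqrt_pos.2 ((hp z).lt_of_ne' hz))
  rw [tsum_mul_right] at hle
  have hlog := log_le_log (mul_pos hS (exp_pos _)) hle
  rw [log_mul hS.ne' (exp_pos _).ne', log_exp, log_exp] at hlog
  linarith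

/-- If the information content `I(z) = −log p(z)` of a discrete distribution
with finite Shannon entropy `H` is sub-exponential about its mean, i.e.
`∑_z p(z) exp(λ(I(z) − H)) ≤ exp(ν²λ²)` for all `|λ| ≤ 1/b` with `0 < b ≤ 2`,
then `∑_z √(p(z))` is finite and the order-1/2 Rényi entropy satisfies
`H_{1/2} = 2 log ∑_z √(p(z)) ≤ H + ν²/2`. -/
theorem renyi_half_le_shannon_add_subexp
    {ι : Type*} [Countable ι] (p : ι → ℝ) (hp : ∀ z, 0 ≤ p z) (hp1 : ∑' z, p z = 1)
    (H : ℝ) (hHsum : Summable (fun z => p z * (-Real.log (p z))))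
    (hH : H = ∑' z, p z * (-Real.log (p z)))
    (ν b : ℝ) (hν : 0 < ν) (hb : 0 < b) (hb2 : b ≤ 2)
    (hmgf : ∀ lam : ℝ, |lam| ≤ 1 / b →
      ∑' z, ENNReal.ofReal (p z * Real.exp (lam * (-Real.log (p z) - H)))
        ≤ ENNReal.ofReal (Real.exp (ν ^ 2 * lam ^ 2))) :
    Summable (fun z => Real.sqrt (p z)) ∧
      2 * Real.log (∑' z, Real.sqrt (p z)) ≤ H + ν ^ 2 / 2 :=
  renyi_half_le_shannon_add_subexp_general p hp hp1 H ν b hb hb2 hmgf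
end

section
/- Let ι be a finite nonempty type, z : ι → ℝ^d a family of points, p : ι → ℝ with p(i) > 0 for all i and ∑_i p(i) = 1, and t > 0. Define the posterior weights w_i(y) := p(i) exp(−‖y − z(i)‖²/(2t)) / ∑_j p(j) exp(−‖y − z(j)‖²/(2t)) and the posterior mean m(y) := ∑_i w_i(y) · z(i). Then m : ℝ^d → ℝ^d is differentiable at every y ∈ ℝ^d, and its Fréchet derivative satisfies, for every direction v ∈ ℝ^d, (Dm(y))(v) = (1/t) · ∑_i w_i(y) · ⟨ z(i) − m(y), v ⟩ · ( z(i) − m(y) ), i.e. the Jacobian of m at y equals 1/t times the covariance matrix of the discrete distribution that puts mass w_i(y) at z(i). -/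
/-! The posterior mean is the center of mass of the `z i` with weights
`g i y = p i exp (-‖y - z i‖² / (2t))`, whose logarithmic derivatives are `⟪z i - y, ·⟫ / t`.
Differentiating a center of mass whose weights have logarithmic derivatives `ℓ i` gives the
weighted covariance `∑ i, w i • ℓ i (·) • (z i - m)`. Since `∑ i, w i • (z i - m) = 0`, the base
point `y` in `⟪z i - y, ·⟫` may then be replaced by `m`. -/

open Finset Real ContinuousLinearMap

section CenterMass

variable {ι R F : Type*} [Field R] [AddCommGroup F] [Module R F]

theorem Finset.sum_smul_sub_centerMass {s : Finset ι} {w : ι → R} (z : ι → F)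
    (hw : ∑ i ∈ s, w i ≠ 0) : ∑ i ∈ s, w i • (z i - s.centerMass w z) = 0 := by
  simp only [smul_sub, sum_sub_distrib, ← sum_smul, ← sum_mul, centerMass, smul_smul,
    mul_inv_cancel₀ hw, one_smul, sub_self]

theorem Finset.sum_mul_map_sub_smul_sub_centerMass {s : Finset ι} {w : ι → R} (z : ι → F)
    (hw : ∑ i ∈ s, w i ≠ 0) (f : F →ₗ[R] R) (y : F) :
    ∑ i ∈ s, (w i * f (z i - y)) • (z i - s.centerMass w z)
      = ∑ i ∈ s, (w i * f (z i - s.centerMass w z)) • (z i - s.centerMass w z) := by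
  have hf (i : ι) : f (z i - y) = f (z i - s.centerMass w z) + f (s.centerMass w z - y) := by
    rw [← map_add, sub_add_sub_cancel]
  simp only [hf, mul_add, add_smul, sum_add_distrib, mul_comm _ (f _), ← smul_smul, ← smul_sum,
    sum_smul_sub_centerMass z hw, smul_zero, add_zero]

end CenterMass

theorem hasFDerivAt_centerMass {ι E F : Type*} [NormedAddCommGroup E] [NormedSpace ℝ E]
    [NormedAddCommGroup F] [NormedSpace ℝ F] {s : Finset ι} {g : ι → E → ℝ}
    {ℓ : ι → E →L[ℝ] ℝ} (z : ι → F) {y : E} (hg : ∀ i ∈ s, HasFDerivAt (g i) (g i y • ℓ i) y)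
    (hS : ∑ i ∈ s, g i y ≠ 0) :
    HasFDerivAt (fun x => s.centerMass (g · x) z)
      (∑ i ∈ s, (g i y / ∑ j ∈ s, g j y) • (ℓ i).smulRight (z i - s.centerMass (g · y) z)) y := by
  have hinv := (hasDerivAt_inv hS).comp_hasFDerivAt y (HasFDerivAt.fun_sum hg)
  refine (hinv.smul (HasFDerivAt.fun_sum fun i hi => (hg i hi).smul_const (z i))).congr_fderiv ?_
  ext v
  set M := s.centerMass (g · y) z
  have hN : ∑ i ∈ s, g i y • z i = (∑ i ∈ s, g i y) • M := by
    simp only [M, centerMass, smul_smul, mul_inv_cancel₀ hS, one_smul]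
  simp only [add_apply, smul_apply, _root_.sum_apply, smulRight_apply, Function.comp_apply, hN,
    smul_eq_mul, smul_sum, smul_smul, smul_sub, sum_sub_distrib, ← sum_smul]
  rw [sub_eq_add_neg, ← neg_smul]
  congr 1
  · exact sum_congr rfl fun i _ => by congr 1; ring
  · rw [sum_mul, ← sum_neg_distrib]
    exact congrArg (· • M) (sum_congr rfl fun i _ => by field_simp)

theorem hasFDerivAt_mul_exp_neg_norm_sub_sq_div {E : Type*} [NormedAddCommGroup E]
    [InnerProductSpace ℝ E] (c t : ℝ) (a y : E) :
    HasFDerivAt (fun x => c * exp (-‖x - a‖ ^ 2 / (2 * t)))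
      ((c * exp (-‖y - a‖ ^ 2 / (2 * t))) • t⁻¹ • innerSL ℝ (a - y)) y := by
  have hsq := (hasFDerivAt_sub_const (x := y) a).norm_sq.mul_const (-(2 * t)⁻¹)
  have hexp (x : E) : -‖x - a‖ ^ 2 / (2 * t) = ‖x - a‖ ^ 2 * -(2 * t)⁻¹ := by ring
  simp only [hexp]
  refine (hsq.exp.const_mul c).congr_fderiv ?_
  ext v
  simp only [smul_apply, comp_apply, innerSL_apply_apply, coe_id', id, smul_eq_mul, nsmul_eq_mul,
    Nat.cast_ofNat]
  rw [← neg_sub y a, inner_neg_left]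
  field_simp

theorem posterior_mean_fderiv_eq_cov_general
    {ι : Type*} [Fintype ι] [Nonempty ι] {d : ℕ}
    (z : ι → EuclideanSpace ℝ (Fin d)) (p : ι → ℝ)
    (hp : ∀ i, 0 < p i)
    (t : ℝ)
    (w : ι → EuclideanSpace ℝ (Fin d) → ℝ)
    (hw : ∀ i y, w i y =
      p i * Real.exp (-‖y - z i‖ ^ 2 / (2 * t)) /
        ∑ j, p j * Real.exp (-‖y - z j‖ ^ 2 / (2 * t)))
    (m : EuclideanSpace ℝ (Fin d) → EuclideanSpace ℝ (Fin d))
    (hm : ∀ y, m y = ∑ i, w i y • z i) :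
    ∀ y, DifferentiableAt ℝ m y ∧
      ∀ v, fderiv ℝ m y v
        = (1 / t) • ∑ i, (w i y * (inner ℝ (z i - m y) v : ℝ)) • (z i - m y) := by
  intro y
  set g : ι → EuclideanSpace ℝ (Fin d) → ℝ := fun i x => p i * exp (-‖x - z i‖ ^ 2 / (2 * t))
  have hS (x) : ∑ i, g i x ≠ 0 :=
    (sum_pos (fun i _ => mul_pos (hp i) (exp_pos _)) univ_nonempty).ne'
  have hm_eq : m = fun x => univ.centerMass (g · x) z := by
    funext x
    rw [hm, centerMass, smul_sum]
    exact sum_congr rfl fun i _ => by rw [hw, smul_smul, div_eq_inv_mul]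
  have hD : HasFDerivAt m
      (∑ i, w i y • (t⁻¹ • innerSL ℝ (z i - y)).smulRight (z i - m y)) y := by
    simpa only [hm_eq, hw] using hasFDerivAt_centerMass z
      (fun i _ => hasFDerivAt_mul_exp_neg_norm_sub_sq_div (p i) t (z i) y) (hS y)
  have hw1 : ∑ i, w i y = 1 := by
    simp only [hw, ← sum_div]
    exact div_self (hS y)
  have hmy : m y = univ.centerMass (w · y) z := by
    rw [centerMass_eq_of_sum_1 _ _ hw1, hm]
  refine ⟨hD.differentiableAt, fun v => ?_⟩
  calc fderiv ℝ m y v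
      = (1 / t) • ∑ i, (w i y * (innerₗ _).flip v (z i - y)) • (z i - m y) := by
        simp only [hD.fderiv, _root_.sum_apply, smul_apply, smulRight_apply, innerSL_apply_apply,
          LinearMap.flip_apply, innerₗ_apply_apply, smul_sum, smul_smul, smul_eq_mul]
        exact sum_congr rfl fun i _ => by congr 1; ring
    _ = (1 / t) • ∑ i, (w i y * (inner ℝ (z i - m y) v : ℝ)) • (z i - m y) := by
        rw [hmy, sum_mul_map_sub_smul_sub_centerMass z (hw1 ▸ one_ne_zero)]
        rfl

/-- The posterior mean `m(y) = ∑_i w_i(y) z(i)` of a finite Gaussian mixture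
posterior is differentiable, and its Jacobian equals `1/t` times the posterior covariance:
`(Dm(y))(v) = (1/t) ∑_i w_i(y) ⟨z(i) − m(y), v⟩ (z(i) − m(y))`. -/
theorem posterior_mean_fderiv_eq_cov
    {ι : Type*} [Fintype ι] [Nonempty ι] {d : ℕ}
    (z : ι → EuclideanSpace ℝ (Fin d)) (p : ι → ℝ)
    (hp : ∀ i, 0 < p i) (hp1 : ∑ i, p i = 1)
    (t : ℝ) (ht : 0 < t)
    (w : ι → EuclideanSpace ℝ (Fin d) → ℝ)
    (hw : ∀ i y, w i y =
      p i * Real.exp (-‖y - z i‖ ^ 2 / (2 * t)) /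
        ∑ j, p j * Real.exp (-‖y - z j‖ ^ 2 / (2 * t)))
    (m : EuclideanSpace ℝ (Fin d) → EuclideanSpace ℝ (Fin d))
    (hm : ∀ y, m y = ∑ i, w i y • z i) :
    ∀ y, DifferentiableAt ℝ m y ∧
      ∀ v, fderiv ℝ m y v
        = (1 / t) • ∑ i, (w i y * (inner ℝ (z i - m y) v : ℝ)) • (z i - m y) :=
  posterior_mean_fderiv_eq_cov_general z p hp t w hw m hm
end
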